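/- Projection for the copy mechanism: let p be a probability mass function on 𝒳 × 𝒴 and set Z = (X,Y), so that for x with p(x) > 0 the conditional distribution of Z given x is P_x(x',y') = 1[x'=x]·p(y'|x), and for y with p(y) > 0 it is P_y(x',y') = p(x'|y)·1[y'=y]. Let C_X ⊆ Δ(𝒳×𝒴) be the convex hull of {P_x : p(x) > 0}. Then for every y with p(y) > 0, the distribution r(x',y') = p(x'|y)·p(y'|x') (interpreting p(x'|y)·p(y'|x') as 0 when p(x'|y) = 0) belongs to C_X and attains the minimum of D(P_y‖·) over C_X; equivalently, for every α : 𝒳 → [0,1] with Σ_{x'} α(x') = 1, Σ_{x'} p(x'|y) log(p(x'|y)/(α(x')·p(y|x'))) ≥ Σ_{x'} p(x'|y) log(1/p(y|x')). -/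

import Mathlib

/-!
Every element of `C_X` has the form `α(x') p(y'|x')` for a distribution `α` on `𝓧`, and `r` is the
one with `α = p(·|y)`. Since `P_y` lives on the slice `y' = y`, its divergence from `α(x') p(y'|x')`
is `Σ p(x'|y) log (p(x'|y) / (α(x') p(y|x')))`, which splits as
`D(p(·|y) ‖ α) + Σ p(x'|y) log (1 / p(y|x'))`. Gibbs' inequality makes the first term nonnegative,
and it vanishes at `α = p(·|y)`.
-/

open scoped BigOperators

/-- `p` is a probability mass function on a finite type. -/
def IsPMF {α : Type*} [Fintype α] (p : α → ℝ) : Prop :=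
  (∀ a, 0 ≤ p a) ∧ ∑ a, p a = 1

/-- Kullback–Leibler divergence `D(u‖v) = Σ u log (u/v)` (with the convention `0 log 0 = 0`),
`⊤` if absolute continuity fails, i.e. if `u a > 0 = v a` for some `a`. -/
noncomputable def klDiv {α : Type*} [Fintype α] (u v : α → ℝ) : EReal :=
  if ∀ a, 0 < u a → 0 < v a then ((∑ a, u a * Real.log (u a / v a) : ℝ) : EReal) else ⊤

variable {𝓧 𝓨 : Type*} [Fintype 𝓧] [Fintype 𝓨] [DecidableEq 𝓧] [DecidableEq 𝓨]

/-- Marginal `p(x)`. -/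
noncomputable def margX (p : 𝓧 × 𝓨 → ℝ) (x : 𝓧) : ℝ := ∑ y, p (x, y)

/-- Marginal `p(y)`. -/
noncomputable def margY (p : 𝓧 × 𝓨 → ℝ) (y : 𝓨) : ℝ := ∑ x, p (x, y)

/-- Conditional `p(y|x) = p(x,y)/p(x)`. -/
noncomputable def condYgX (p : 𝓧 × 𝓨 → ℝ) (x : 𝓧) (y : 𝓨) : ℝ := p (x, y) / margX p x

/-- Conditional `p(x|y) = p(x,y)/p(y)`. -/
noncomputable def condXgY (p : 𝓧 × 𝓨 → ℝ) (y : 𝓨) (x : 𝓧) : ℝ := p (x, y) / margY p y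

/-- For the copy mechanism `Z = (X,Y)`, the conditional distribution of `Z` given `X = x`:
`P_x(x',y') = 1[x'=x]·p(y'|x)`. -/
noncomputable def Pcondx (p : 𝓧 × 𝓨 → ℝ) (x : 𝓧) : 𝓧 × 𝓨 → ℝ :=
  fun t => (if t.1 = x then 1 else 0) * condYgX p x t.2

/-- For the copy mechanism `Z = (X,Y)`, the conditional distribution of `Z` given `Y = y`:
`P_y(x',y') = p(x'|y)·1[y'=y]`. -/
noncomputable def Pcondy (p : 𝓧 × 𝓨 → ℝ) (y : 𝓨) : 𝓧 × 𝓨 → ℝ :=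
  fun t => condXgY p y t.1 * (if t.2 = y then 1 else 0)

/-- `C_X ⊆ Δ(𝓧 × 𝓨)`: convex hull of `{P_x : p(x) > 0}`. -/
noncomputable def CXcopy (p : 𝓧 × 𝓨 → ℝ) : Set (𝓧 × 𝓨 → ℝ) :=
  convexHull ℝ {q | ∃ x, 0 < margX p x ∧ q = Pcondx p x}

/-- The distribution `r(x',y') = p(x'|y)·p(y'|x')` (equal to `0` when `p(x'|y) = 0`). -/
noncomputable def rProj (p : 𝓧 × 𝓨 → ℝ) (y : 𝓨) : 𝓧 × 𝓨 → ℝ :=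
  fun t => condXgY p y t.1 * condYgX p t.1 t.2

open Finset Set Real

section Gibbs

variable {ι : Type*} [Fintype ι]

lemma sub_le_mul_log_div {u v : ℝ} (hu : 0 ≤ u) (hv : 0 ≤ v) (huv : 0 < u → 0 < v) :
    u - v ≤ u * log (u / v) := by
  rcases hu.eq_or_lt with rfl | hu
  · simpa using hv
  have hv := huv hu
  calc u - v = u * (1 - (u / v)⁻¹) := by field_simp
    _ ≤ u * log (u / v) := by gcongr; exact one_sub_inv_le_log_of_pos (div_pos hu hv)

theorem sum_mul_log_div_nonneg {u v : ι → ℝ} (hu : ∀ a, 0 ≤ u a) (hv : ∀ a, 0 ≤ v a)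
    (hu1 : ∑ a, u a = 1) (hv1 : ∑ a, v a ≤ 1) (huv : ∀ a, 0 < u a → 0 < v a) :
    0 ≤ ∑ a, u a * log (u a / v a) :=
  calc (0 : ℝ) ≤ ∑ a, (u a - v a) := by rw [sum_sub_distrib]; linarith
    _ ≤ _ := sum_le_sum fun a _ => sub_le_mul_log_div (hu a) (hv a) (huv a)

lemma klDiv_self_mul {u w : ι → ℝ} (hw : ∀ a, 0 < u a → 0 < w a) :
    klDiv u (fun a => u a * w a) = ((∑ a, u a * log (1 / w a) : ℝ) : EReal) := by
  rw [klDiv, if_pos fun a ha => mul_pos ha (hw a ha)]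
  congr 2 with a
  rcases eq_or_ne (u a) 0 with h | h
  · simp [h]
  · rw [div_mul_cancel_left₀ h, one_div]

theorem sum_mul_log_one_div_le_klDiv_mul {u α w : ι → ℝ} (hu : ∀ a, 0 ≤ u a)
    (hu1 : ∑ a, u a = 1) (hα : ∀ a, 0 ≤ α a) (hα1 : ∑ a, α a ≤ 1) :
    ((∑ a, u a * log (1 / w a) : ℝ) : EReal) ≤ klDiv u (fun a => α a * w a) := by
  rw [klDiv]
  split_ifs with hac
  swap
  · exact le_top
  have hw : ∀ a, 0 < u a → 0 < w a := fun a ha => pos_of_mul_pos_right (hac a ha) (hα a)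
  have hαpos : ∀ a, 0 < u a → 0 < α a := fun a ha => pos_of_mul_pos_left (hac a ha) (hw a ha).le
  have hsplit : ∀ a, u a * log (u a / (α a * w a)) =
      u a * log (u a / α a) + u a * log (1 / w a) := by
    intro a
    rcases (hu a).eq_or_lt with h | h
    · simp [← h]
    rw [← mul_add, ← log_mul (div_pos h (hαpos a h)).ne' (one_div_pos.2 (hw a h)).ne']
    congr 2
    field_simp
  rw [EReal.coe_le_coe_iff, sum_congr rfl fun a _ => hsplit a, sum_add_distrib,
    le_add_iff_nonneg_left]
  exact sum_mul_log_div_nonneg hu hα hu1 hα1 hαpos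

end Gibbs

lemma mem_convexHull_of_sum_smul {ι E : Type*} [Fintype ι] [AddCommGroup E] [Module ℝ E]
    {s : Set E} {w : ι → ℝ} {z : ι → E} (hw : ∀ i, 0 ≤ w i) (hw1 : ∑ i, w i = 1)
    (hz : ∀ i, w i ≠ 0 → z i ∈ s) : ∑ i, w i • z i ∈ convexHull ℝ s := by
  classical
  rw [← sum_filter_of_ne (p := fun i => w i ≠ 0) fun i _ h => left_ne_zero_of_smul h]
  refine (convex_convexHull ℝ s).sum_mem (fun i _ => hw i) ?_
    fun i hi => subset_convexHull ℝ s (hz i (mem_filter.1 hi).2)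
  rwa [sum_filter_ne_zero]

section CopyMechanism

omit [Fintype 𝓧] [Fintype 𝓨] [DecidableEq 𝓧] [DecidableEq 𝓨]

lemma klDiv_mul_ite_snd [Fintype 𝓧] [Fintype 𝓨] [DecidableEq 𝓨] (u : 𝓧 → ℝ)
    (v : 𝓧 × 𝓨 → ℝ) (y : 𝓨) :
    klDiv (fun t => u t.1 * if t.2 = y then 1 else 0) v = klDiv u (fun x => v (x, y)) := by
  have hac : (∀ t : 𝓧 × 𝓨, 0 < u t.1 * (if t.2 = y then 1 else 0) → 0 < v t) ↔
      ∀ x, 0 < u x → 0 < v (x, y) := by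
    refine ⟨fun h x hx => h (x, y) (by simpa using hx), fun h ⟨x, y'⟩ ht => ?_⟩
    obtain rfl : y' = y := by by_contra hy; simp [hy] at ht
    exact h x (by simpa using ht)
  simp only [klDiv, hac]
  congr 2
  rw [Fintype.sum_prod_type]
  refine sum_congr rfl fun x _ => ?_
  rw [sum_eq_single y (fun y' _ hy' => by simp [hy']) (by simp)]
  simp

def jointOf (K : 𝓧 → 𝓨 → ℝ) : (𝓧 → ℝ) →ₗ[ℝ] (𝓧 × 𝓨 → ℝ) where
  toFun α t := α t.1 * K t.1 t.2
  map_add' α β := by ext t; simp [add_mul]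
  map_smul' c α := by ext t; simp [mul_assoc]

lemma convexHull_range_jointOf_single [Fintype 𝓧] [DecidableEq 𝓧] (K : 𝓧 → 𝓨 → ℝ) :
    convexHull ℝ (range fun x => jointOf K (Pi.single x 1)) = jointOf K '' stdSimplex ℝ 𝓧 := by
  rw [← convexHull_rangle_single_eq_stdSimplex, LinearMap.image_convexHull, ← range_comp]
  rfl

variable {p : 𝓧 × 𝓨 → ℝ}

lemma condXgY_nonneg [Fintype 𝓧] (hp : ∀ t, 0 ≤ p t) (y : 𝓨) (x : 𝓧) : 0 ≤ condXgY p y x :=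
  div_nonneg (hp _) (sum_nonneg fun _ _ => hp _)

lemma sum_condXgY [Fintype 𝓧] {y : 𝓨} (hy : margY p y ≠ 0) : ∑ x, condXgY p y x = 1 := by
  unfold condXgY
  rw [← sum_div]
  exact div_self hy

lemma margX_pos_of_condXgY_ne_zero [Fintype 𝓧] [Fintype 𝓨] (hp : ∀ t, 0 ≤ p t) {y : 𝓨}
    {x : 𝓧} (h : condXgY p y x ≠ 0) : 0 < margX p x :=
  ((hp _).lt_of_ne (left_ne_zero_of_mul h).symm).trans_le
    (single_le_sum (fun y' _ => hp (x, y')) (mem_univ y))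

lemma condYgX_pos_of_condXgY_pos [Fintype 𝓧] [Fintype 𝓨] (hp : ∀ t, 0 ≤ p t) {y : 𝓨}
    {x : 𝓧} (h : 0 < condXgY p y x) : 0 < condYgX p x y :=
  div_pos ((hp _).lt_of_ne (left_ne_zero_of_mul h.ne').symm)
    (margX_pos_of_condXgY_ne_zero hp h.ne')

lemma Pcondx_eq_jointOf [Fintype 𝓨] [DecidableEq 𝓧] (p : 𝓧 × 𝓨 → ℝ) (x : 𝓧) :
    Pcondx p x = jointOf (condYgX p) (Pi.single x 1) := by
  ext t
  by_cases h : t.1 = x <;> simp [Pcondx, jointOf, h]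

lemma CXcopy_subset_jointOf_image [Fintype 𝓧] [Fintype 𝓨] [DecidableEq 𝓧]
    (p : 𝓧 × 𝓨 → ℝ) : CXcopy p ⊆ jointOf (condYgX p) '' stdSimplex ℝ 𝓧 := by
  rw [← convexHull_range_jointOf_single]
  refine convexHull_mono ?_
  rintro _ ⟨x, -, rfl⟩
  exact ⟨x, (Pcondx_eq_jointOf p x).symm⟩

lemma rProj_mem_CXcopy [Fintype 𝓧] [Fintype 𝓨] [DecidableEq 𝓧] (hp : ∀ t, 0 ≤ p t) {y : 𝓨}
    (hy : 0 < margY p y) : rProj p y ∈ CXcopy p := by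
  have hr : ∑ x, condXgY p y x • Pcondx p x = rProj p y := by
    ext t
    simp [Pcondx, rProj, Finset.sum_apply, mul_ite]
  rw [← hr]
  exact mem_convexHull_of_sum_smul (condXgY_nonneg hp y) (sum_condXgY hy.ne')
    fun x hx => ⟨x, margX_pos_of_condXgY_ne_zero hp hx, rfl⟩

end CopyMechanism

theorem copy_mechanism_projection_general
    (p : 𝓧 × 𝓨 → ℝ) (hp : IsPMF p) :
    ∀ y, 0 < margY p y →
      rProj p y ∈ CXcopy p ∧
      klDiv (Pcondy p y) (rProj p y) = (⨅ q ∈ CXcopy p, klDiv (Pcondy p y) q) ∧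
      ∀ α : 𝓧 → ℝ, (∀ x', 0 ≤ α x' ∧ α x' ≤ 1) → (∑ x', α x' = 1) →
        ((∑ x', condXgY p y x' * Real.log (1 / condYgX p x' y) : ℝ) : EReal) ≤
          klDiv (condXgY p y) (fun x' => α x' * condYgX p x' y) := by
  intro y hy
  have hmin : ∀ α ∈ stdSimplex ℝ 𝓧,
      ((∑ x, condXgY p y x * log (1 / condYgX p x y) : ℝ) : EReal) ≤
        klDiv (condXgY p y) (fun x => α x * condYgX p x y) := fun α hα =>
    sum_mul_log_one_div_le_klDiv_mul (condXgY_nonneg hp.1 y) (sum_condXgY hy.ne') hα.1 hα.2.le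
  have hr : klDiv (Pcondy p y) (rProj p y) =
      ((∑ x, condXgY p y x * log (1 / condYgX p x y) : ℝ) : EReal) :=
    (klDiv_mul_ite_snd _ _ y).trans
      (klDiv_self_mul fun _ => condYgX_pos_of_condXgY_pos hp.1)
  have hmem := rProj_mem_CXcopy hp.1 hy
  refine ⟨hmem, le_antisymm (le_iInf₂ fun q hq => ?_) (iInf₂_le _ hmem),
    fun α hα hα1 => hmin α ⟨fun x => (hα x).1, hα1⟩⟩
  obtain ⟨α, hα, rfl⟩ := CXcopy_subset_jointOf_image p hq
  rw [hr]
  exact (hmin α hα).trans_eq (klDiv_mul_ite_snd (condXgY p y) (jointOf (condYgX p) α) y).symm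

/-- Projection for the copy mechanism `Z = (X,Y)`: for every `y` with `p(y) > 0`, the
distribution `r(x',y') = p(x'|y)·p(y'|x')` belongs to `C_X` and attains the minimum of
`D(P_y‖·)` over `C_X`; equivalently, for every `α : 𝓧 → [0,1]` with `Σ α(x') = 1`,
`Σ_{x'} p(x'|y) log (p(x'|y)/(α(x')·p(y|x'))) ≥ Σ_{x'} p(x'|y) log (1/p(y|x'))`
(the left-hand side being the KL-type expression, `+∞` if `α(x')·p(y|x') = 0 < p(x'|y)`). -/
theorem copy_mechanism_projection
    [Nonempty 𝓧] [Nonempty 𝓨]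
    (p : 𝓧 × 𝓨 → ℝ) (hp : IsPMF p) :
    ∀ y, 0 < margY p y →
      rProj p y ∈ CXcopy p ∧
      klDiv (Pcondy p y) (rProj p y) = (⨅ q ∈ CXcopy p, klDiv (Pcondy p y) q) ∧
      ∀ α : 𝓧 → ℝ, (∀ x', 0 ≤ α x' ∧ α x' ≤ 1) → (∑ x', α x' = 1) →
        ((∑ x', condXgY p y x' * Real.log (1 / condYgX p x' y) : ℝ) : EReal) ≤
          klDiv (condXgY p y) (fun x' => α x' * condYgX p x' y) :=
  copy_mechanism_projection_general p hp
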